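/- arXiv:1612.09040 — 6 statements merged into one kernel-verified Lean document; each statement's English description precedes it below -/
import Mathlib

section
/- Let X be δ-regular with constant C_R on scales α₀ to α₁ where α₁ ≥ 2α₀, and fix T ≥ 1. Then the neighborhood X(Tα₀) = X + [−Tα₀, Tα₀] is δ-regular with constant 4TC_R on scales 2α₀ to α₁. -/
/-!
Instead of the convolution of `μ_X` with the normalised indicator of `[-Tα₀, Tα₀]` we use its
discrete analogue: the sum of the translates of `μ_X` by `k s`, `|k| ≤ N`, where `N = ⌈2T⌉` and
`s = Tα₀ / N ≤ α₀ / 2`, weighted by `1 / (2T)`. All translates live on `X(Tα₀)`. Each one obeys the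
upper bound and there are `2N + 1 ≤ 8T²` of them. For the lower bound, if the centre of `I` is
within `Tα₀` of `x ∈ X`, one translate brings `x` within `s / 2` of that centre, so `I` contains
the translate of an interval centred at `x` of length `|I| - s ≥ 3|I| / 4`; since `δ ≤ 1` this
costs at most a factor `2`.
-/

open MeasureTheory Set

/-- `X` is δ-regular with constant `CR` on scales `α₀` to `α₁`. -/
def IsDeltaRegular (X : Set ℝ) (δ CR α₀ α₁ : ℝ) : Prop :=
  ∃ μ : Measure ℝ,
    μ Xᶜ = 0 ∧
    (∀ a b : ℝ, α₀ ≤ b - a → b - a ≤ α₁ →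
        μ (Set.Icc a b) ≤ ENNReal.ofReal (CR * (b - a) ^ δ)) ∧
    (∀ a b : ℝ, α₀ ≤ b - a → b - a ≤ α₁ → (a + b) / 2 ∈ X →
        ENNReal.ofReal (CR⁻¹ * (b - a) ^ δ) ≤ μ (Set.Icc a b))

noncomputable def latticeShiftSum (μ : Measure ℝ) (s : ℝ) (N : ℕ) : Measure ℝ :=
  ∑ k ∈ Finset.Icc (-(N : ℤ)) N, μ.map (· + k * s)

section latticeShiftSum

variable (μ : Measure ℝ) {s : ℝ} {N : ℕ}

lemma latticeShiftSum_apply (A : Set ℝ) :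
    latticeShiftSum μ s N A = ∑ k ∈ Finset.Icc (-(N : ℤ)) N, μ ((· + k * s) ⁻¹' A) := by
  simp only [latticeShiftSum, Measure.finsetSum_apply]
  exact Finset.sum_congr rfl fun k _ =>
    (MeasurableEquiv.addRight _).measurableEmbedding.map_apply μ A

lemma latticeShiftSum_apply_Icc (a b : ℝ) :
    latticeShiftSum μ s N (Icc a b) =
      ∑ k ∈ Finset.Icc (-(N : ℤ)) N, μ (Icc (a - k * s) (b - k * s)) := by
  simp only [latticeShiftSum_apply, preimage_add_const_Icc]

lemma latticeShiftSum_compl_eq_zero {X : Set ℝ} {r : ℝ} (hX : μ Xᶜ = 0) (hs : 0 ≤ s)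
    (hNs : N * s ≤ r) : latticeShiftSum μ s N {z | ∃ x ∈ X, |z - x| ≤ r}ᶜ = 0 := by
  rw [latticeShiftSum_apply]
  refine Finset.sum_eq_zero fun k hk => measure_mono_null (fun x hx hxX => hx ⟨x, hxX, ?_⟩) hX
  have hk : |(k : ℝ)| ≤ N := abs_le.mpr (by exact_mod_cast Finset.mem_Icc.mp hk)
  calc |x + k * s - x| = |(k : ℝ)| * s := by rw [add_sub_cancel_left, abs_mul, abs_of_nonneg hs]
    _ ≤ N * s := by gcongr
    _ ≤ r := hNs

lemma latticeShiftSum_Icc_le {a b M : ℝ} (h : ∀ t, μ (Icc (a - t) (b - t)) ≤ ENNReal.ofReal M) :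
    latticeShiftSum μ s N (Icc a b) ≤ ENNReal.ofReal ((2 * N + 1) * M) := by
  calc latticeShiftSum μ s N (Icc a b)
      ≤ ∑ _k ∈ Finset.Icc (-(N : ℤ)) N, ENNReal.ofReal M := by
        rw [latticeShiftSum_apply_Icc]
        exact Finset.sum_le_sum fun k _ => h _
    _ = ENNReal.ofReal ((2 * N + 1) * M) := by
        rw [Finset.sum_const, Int.card_Icc, nsmul_eq_mul, ENNReal.ofReal_mul (by positivity)]
        congr
        rw [show (N : ℤ) + 1 - -N = ((2 * N + 1 : ℕ) : ℤ) by push_cast; ring, Int.toNat_natCast]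
        norm_cast

lemma exists_mem_Icc_abs_sub_int_mul_le {d : ℝ} (hs : 0 ≤ s) (hd : |d| ≤ N * s) :
    ∃ k ∈ Finset.Icc (-(N : ℤ)) N, |d - k * s| ≤ s / 2 := by
  rcases hs.eq_or_lt with rfl | hs
  · exact ⟨0, by simp, by simpa using hd⟩
  refine ⟨round (d / s), Finset.mem_Icc.mpr (abs_le.mp ?_), ?_⟩
  · have hds : |d / s| ≤ N := by rwa [abs_div, abs_of_pos hs, div_le_iff₀ hs]
    have : |(round (d / s) : ℝ)| < N + 1 := by
      have := abs_sub_abs_le_abs_sub (round (d / s) : ℝ) (d / s)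
      rw [abs_sub_comm] at this
      linarith [abs_sub_round (d / s)]
    have : |round (d / s)| < (N : ℤ) + 1 := by exact_mod_cast this
    omega
  · calc |d - round (d / s) * s| = |d / s - round (d / s)| * s := by
          rw [← abs_of_pos hs, ← abs_mul, abs_of_pos hs, sub_mul, div_mul_cancel₀ _ hs.ne']
      _ ≤ 1 / 2 * s := by gcongr; exact abs_sub_round _
      _ = s / 2 := by ring

lemma measure_Icc_le_latticeShiftSum {a b x : ℝ} (hs : 0 ≤ s) (hx : |(a + b) / 2 - x| ≤ N * s) :
    μ (Icc (x - (b - a - s) / 2) (x + (b - a - s) / 2)) ≤ latticeShiftSum μ s N (Icc a b) := by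
  obtain ⟨k, hk, hks⟩ := exists_mem_Icc_abs_sub_int_mul_le hs hx
  have hks := abs_le.mp hks
  rw [latticeShiftSum_apply_Icc]
  calc μ (Icc (x - (b - a - s) / 2) (x + (b - a - s) / 2))
      ≤ μ (Icc (a - k * s) (b - k * s)) :=
        measure_mono (Icc_subset_Icc (by linarith) (by linarith))
    _ ≤ _ := Finset.single_le_sum (f := fun j : ℤ => μ (Icc (a - j * s) (b - j * s)))
          (fun j _ => zero_le) hk

end latticeShiftSum

lemma half_mul_rpow_le_rpow_sub {δ L s : ℝ} (hδ0 : 0 ≤ δ) (hδ1 : δ ≤ 1) (hL : 0 ≤ L)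
    (hs : 4 * s ≤ L) : 2⁻¹ * L ^ δ ≤ (L - s) ^ δ :=
  calc 2⁻¹ * L ^ δ ≤ (3 / 4 : ℝ) ^ δ * L ^ δ := by
        gcongr
        linarith [Real.self_le_rpow_of_le_one (by norm_num : (0 : ℝ) ≤ 3 / 4) (by norm_num) hδ1]
    _ = (3 / 4 * L) ^ δ := (Real.mul_rpow (by norm_num) hL).symm
    _ ≤ (L - s) ^ δ := Real.rpow_le_rpow (by positivity) (by linarith) hδ0

lemma inv_two_mul_mul_two_mul_natCeil_add_one_le {T : ℝ} (hT : 1 ≤ T) :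
    (2 * T)⁻¹ * (2 * ⌈2 * T⌉₊ + 1) ≤ 4 * T := by
  rw [inv_mul_le_iff₀ (by positivity)]
  nlinarith [Nat.ceil_lt_add_one (by positivity : (0 : ℝ) ≤ 2 * T)]

section weightedLatticeShiftSum

variable {μ : Measure ℝ} {δ CR α₀ α₁ T s a b : ℝ}

lemma smul_latticeShiftSum_Icc_le (hCR : 0 ≤ CR) (hT : 1 ≤ T)
    (hup : ∀ a b : ℝ, α₀ ≤ b - a → b - a ≤ α₁ → μ (Icc a b) ≤ ENNReal.ofReal (CR * (b - a) ^ δ))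
    (hab₀ : α₀ ≤ b - a) (hab₁ : b - a ≤ α₁) (hab : 0 ≤ b - a) :
    (ENNReal.ofReal (2 * T)⁻¹ • latticeShiftSum μ s ⌈2 * T⌉₊) (Icc a b) ≤
      ENNReal.ofReal (4 * T * CR * (b - a) ^ δ) := by
  have hμ := latticeShiftSum_Icc_le μ (s := s) (N := ⌈2 * T⌉₊) (M := CR * (b - a) ^ δ) fun t =>
    sub_sub_sub_cancel_right b a t ▸ hup (a - t) (b - t) (by linarith) (by linarith)
  rw [Measure.smul_apply, smul_eq_mul]
  calc ENNReal.ofReal (2 * T)⁻¹ * latticeShiftSum μ s ⌈2 * T⌉₊ (Icc a b)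
      ≤ ENNReal.ofReal (2 * T)⁻¹ * ENNReal.ofReal ((2 * ⌈2 * T⌉₊ + 1) * (CR * (b - a) ^ δ)) := by
        gcongr
    _ = ENNReal.ofReal ((2 * T)⁻¹ * (2 * ⌈2 * T⌉₊ + 1) * (CR * (b - a) ^ δ)) := by
        rw [← ENNReal.ofReal_mul (by positivity), mul_assoc]
    _ ≤ ENNReal.ofReal (4 * T * (CR * (b - a) ^ δ)) := by
        have hP : 0 ≤ CR * (b - a) ^ δ := by positivity
        exact ENNReal.ofReal_le_ofReal
          (mul_le_mul_of_nonneg_right (inv_two_mul_mul_two_mul_natCeil_add_one_le hT) hP)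
    _ = ENNReal.ofReal (4 * T * CR * (b - a) ^ δ) := by ring_nf

lemma le_smul_latticeShiftSum_Icc {X : Set ℝ} {N : ℕ} {x : ℝ} (hδ0 : 0 ≤ δ) (hδ1 : δ ≤ 1)
    (hCR : 0 ≤ CR) (hT : 0 ≤ T)
    (hlow : ∀ a b : ℝ, α₀ ≤ b - a → b - a ≤ α₁ → (a + b) / 2 ∈ X →
      ENNReal.ofReal (CR⁻¹ * (b - a) ^ δ) ≤ μ (Icc a b))
    (hs : 0 ≤ s) (h2s : 2 * s ≤ α₀) (hab₀ : 2 * α₀ ≤ b - a) (hab₁ : b - a ≤ α₁)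
    (hx : x ∈ X) (hxc : |(a + b) / 2 - x| ≤ N * s) :
    ENNReal.ofReal ((4 * T * CR)⁻¹ * (b - a) ^ δ) ≤
      (ENNReal.ofReal (2 * T)⁻¹ • latticeShiftSum μ s N) (Icc a b) := by
  have hball := hlow (x - (b - a - s) / 2) (x + (b - a - s) / 2) (by linarith) (by linarith)
    (by rwa [show (x - (b - a - s) / 2 + (x + (b - a - s) / 2)) / 2 = x by ring])
  rw [show x + (b - a - s) / 2 - (x - (b - a - s) / 2) = b - a - s by ring] at hball
  rw [Measure.smul_apply, smul_eq_mul]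
  calc ENNReal.ofReal ((4 * T * CR)⁻¹ * (b - a) ^ δ)
      ≤ ENNReal.ofReal ((2 * T)⁻¹ * (CR⁻¹ * (b - a - s) ^ δ)) := by
        refine ENNReal.ofReal_le_ofReal ?_
        calc (4 * T * CR)⁻¹ * (b - a) ^ δ = (2 * T)⁻¹ * (CR⁻¹ * (2⁻¹ * (b - a) ^ δ)) := by
              rw [show 4 * T * CR = 2 * T * (CR * 2) by ring, mul_inv, mul_inv]; ring
          _ ≤ _ := by gcongr; exact half_mul_rpow_le_rpow_sub hδ0 hδ1 (by linarith) (by linarith)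
    _ = ENNReal.ofReal (2 * T)⁻¹ * ENNReal.ofReal (CR⁻¹ * (b - a - s) ^ δ) :=
        ENNReal.ofReal_mul (by positivity)
    _ ≤ ENNReal.ofReal (2 * T)⁻¹ * latticeShiftSum μ s N (Icc a b) := by
        gcongr
        exact hball.trans (measure_Icc_le_latticeShiftSum μ hs hxc)

end weightedLatticeShiftSum

theorem stmt_2_general (X : Set ℝ) (δ CR α₀ α₁ T : ℝ)
    (hδ0 : 0 ≤ δ) (hδ1 : δ ≤ 1) (hCR : 1 ≤ CR) (hα0 : 0 ≤ α₀)
    (hT : 1 ≤ T) (h : IsDeltaRegular X δ CR α₀ α₁) :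
    IsDeltaRegular {z : ℝ | ∃ x ∈ X, |z - x| ≤ T * α₀} δ (4 * T * CR) (2 * α₀) α₁ := by
  obtain ⟨μ, hμX, hup, hlow⟩ := h
  set N := ⌈2 * T⌉₊
  have hN : 2 * T ≤ N := Nat.le_ceil _
  set s := T * α₀ / N
  have hNs : N * s = T * α₀ := mul_div_cancel₀ _ (by positivity)
  have hs : 0 ≤ s := by positivity
  have h2s : 2 * s ≤ α₀ := by nlinarith [mul_le_mul_of_nonneg_right hN hα0]
  refine ⟨ENNReal.ofReal (2 * T)⁻¹ • latticeShiftSum μ s N, ?_, ?_, ?_⟩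
  · simp [latticeShiftSum_compl_eq_zero μ hμX hs hNs.le]
  · intro a b hab₀ hab₁
    exact smul_latticeShiftSum_Icc_le (by linarith) hT hup (by linarith) hab₁ (by linarith)
  · rintro a b hab₀ hab₁ ⟨x, hx, hxc⟩
    exact le_smul_latticeShiftSum_Icc hδ0 hδ1 (by linarith) (by linarith) hlow hs h2s hab₀ hab₁
      hx (hNs ▸ hxc)

theorem stmt_2 (X : Set ℝ) (δ CR α₀ α₁ T : ℝ)
    (hδ0 : 0 ≤ δ) (hδ1 : δ ≤ 1) (hCR : 1 ≤ CR) (hα0 : 0 ≤ α₀) (hα : 2 * α₀ ≤ α₁)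
    (hT : 1 ≤ T) (h : IsDeltaRegular X δ CR α₀ α₁) :
    IsDeltaRegular {z : ℝ | ∃ x ∈ X, |z - x| ≤ T * α₀} δ (4 * T * CR) (2 * α₀) α₁ :=
  stmt_2_general X δ CR α₀ α₁ T hδ0 hδ1 hCR hα0 hT h
end

section
/- Let F : ℝ → ℝ be a C¹ diffeomorphism with C_F⁻¹ ≤ |F'(x)| ≤ C_F for all x, for some C_F ≥ 1. If X is δ-regular with constant C_R on scales α₀ to α₁ with α₁ ≥ C_F²α₀, then F(X) is δ-regular with constant C_F·C_R on scales C_Fα₀ to C_F⁻¹α₁. -/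
/-!
The witness for `F '' X` is the pushforward of the measure of `X`. By the mean value theorem
`F` is `C_F`-bi-Lipschitz, so the preimage of an interval of length `ℓ` lies in an interval of
length `C_F ℓ`, and contains the interval of length `ℓ / C_F` centred at the preimage of the
centre. As `C_F ^ δ ≤ C_F` for `δ ≤ 1`, each of the two regularity bounds loses a factor `C_F`,
and rescaling lengths by `C_F` in either direction is what shrinks the window of scales.
-/

open MeasureTheory Set

open NNReal

theorem exists_sub_eq_deriv_mul_sub {f : ℝ → ℝ} (hf : Differentiable ℝ f) (x y : ℝ) :
    ∃ ξ, f x - f y = deriv f ξ * (x - y) := by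
  rcases lt_trichotomy x y with hxy | rfl | hxy
  · obtain ⟨ξ, -, hξ⟩ := exists_deriv_eq_slope f hxy hf.continuous.continuousOn hf.differentiableOn
    refine ⟨ξ, ?_⟩
    rw [hξ, div_mul_eq_mul_div, eq_div_iff (sub_ne_zero.2 hxy.ne')]
    ring
  · exact ⟨x, by ring⟩
  · obtain ⟨ξ, -, hξ⟩ := exists_deriv_eq_slope f hxy hf.continuous.continuousOn hf.differentiableOn
    exact ⟨ξ, by rw [hξ, div_mul_cancel₀ _ (sub_ne_zero.2 hxy.ne')]⟩

theorem antilipschitzWith_of_le_nnnorm_deriv {f : ℝ → ℝ} {c : ℝ≥0} (hc : 0 < c)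
    (hf : Differentiable ℝ f) (bound : ∀ x, c ≤ ‖deriv f x‖₊) : AntilipschitzWith c⁻¹ f := by
  refine AntilipschitzWith.of_le_mul_dist fun x y => ?_
  obtain ⟨ξ, hξ⟩ := exists_sub_eq_deriv_mul_sub hf x y
  have hcξ : (c : ℝ) ≤ |deriv f ξ| := bound ξ
  rw [Real.dist_eq, Real.dist_eq, hξ, abs_mul, NNReal.coe_inv, ← mul_assoc]
  calc |x - y| = (c : ℝ)⁻¹ * c * |x - y| := by field_simp
    _ ≤ (c : ℝ)⁻¹ * |deriv f ξ| * |x - y| := by gcongr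

theorem exists_subset_Icc_of_abs_sub_le {S : Set ℝ} {L : ℝ}
    (hS : ∀ x ∈ S, ∀ y ∈ S, |x - y| ≤ L) : ∃ c, S ⊆ Icc c (c + L) := by
  rcases S.eq_empty_or_nonempty with rfl | ⟨x₀, hx₀⟩
  · exact ⟨0, empty_subset _⟩
  have hbdd : BddBelow S := ⟨x₀ - L, fun y hy => by linarith [(abs_le.1 (hS x₀ hx₀ y hy)).2]⟩
  refine ⟨sInf S, fun x hx => ⟨csInf_le hbdd hx, ?_⟩⟩
  have : x - L ≤ sInf S :=
    le_csInf ⟨x₀, hx₀⟩ fun y hy => by linarith [(abs_le.1 (hS x hx y hy)).2]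
  linarith

theorem mul_rpow_le_mul_rpow_of_one_le {K t δ : ℝ} (hK : 1 ≤ K) (ht : 0 ≤ t) (hδ : δ ≤ 1) :
    (K * t) ^ δ ≤ K * t ^ δ := by
  rw [Real.mul_rpow (by linarith) ht]
  exact mul_le_mul_of_nonneg_right (Real.rpow_le_self_of_one_le hK hδ) (Real.rpow_nonneg ht δ)

theorem LipschitzWith.closedBall_div_subset_preimage {F : ℝ → ℝ} {K : ℝ≥0} (hFl : LipschitzWith K F)
    (hK : K ≠ 0) (p r : ℝ) : Metric.closedBall p (r / K) ⊆ F ⁻¹' Metric.closedBall (F p) r := by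
  have := hFl.mapsTo_closedBall p (r / K)
  rwa [mul_div_cancel₀ _ (NNReal.coe_ne_zero.2 hK)] at this

section PushforwardBounds

variable {μ : Measure ℝ} {X : Set ℝ} {δ CR α₀ α₁ a b : ℝ} {F : ℝ → ℝ} {K : ℝ≥0}

theorem map_Icc_le_of_antilipschitzWith (hF : MeasurableEmbedding F) (hFa : AntilipschitzWith K F)
    (hK : 1 ≤ K) (hδ : δ ≤ 1) (hCR : 0 ≤ CR)
    (hμ : ∀ a b : ℝ, α₀ ≤ b - a → b - a ≤ α₁ → μ (Icc a b) ≤ ENNReal.ofReal (CR * (b - a) ^ δ))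
    (hab : 0 ≤ b - a) (h₀ : α₀ ≤ K * (b - a)) (h₁ : K * (b - a) ≤ α₁) :
    μ.map F (Icc a b) ≤ ENNReal.ofReal (K * CR * (b - a) ^ δ) := by
  obtain ⟨c, hc⟩ : ∃ c, F ⁻¹' Icc a b ⊆ Icc c (c + K * (b - a)) :=
    exists_subset_Icc_of_abs_sub_le fun x hx y hy => by
      simpa only [Real.dist_eq] using
        (hFa.le_mul_dist x y).trans (by gcongr; exact Real.dist_le_of_mem_Icc hx hy)
  have hlen : c + K * (b - a) - c = K * (b - a) := add_sub_cancel_left _ _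
  calc μ.map F (Icc a b) = μ (F ⁻¹' Icc a b) := hF.map_apply μ _
    _ ≤ μ (Icc c (c + K * (b - a))) := measure_mono hc
    _ ≤ ENNReal.ofReal (CR * (K * (b - a)) ^ δ) := by
      have := hμ c (c + K * (b - a)) (by rwa [hlen]) (by rwa [hlen])
      rwa [hlen] at this
    _ ≤ ENNReal.ofReal (K * CR * (b - a) ^ δ) := by
      refine ENNReal.ofReal_le_ofReal ?_
      rw [mul_comm (K : ℝ) CR, mul_assoc]
      exact mul_le_mul_of_nonneg_left (mul_rpow_le_mul_rpow_of_one_le (by exact_mod_cast hK) hab hδ) hCR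

theorem le_map_Icc_of_lipschitzWith (hF : MeasurableEmbedding F) (hFl : LipschitzWith K F)
    (hK : 1 ≤ K) (hδ : δ ≤ 1) (hCR : 0 ≤ CR)
    (hμ : ∀ a b : ℝ, α₀ ≤ b - a → b - a ≤ α₁ → (a + b) / 2 ∈ X →
      ENNReal.ofReal (CR⁻¹ * (b - a) ^ δ) ≤ μ (Icc a b))
    {p : ℝ} (hp : p ∈ X) (hFp : F p = (a + b) / 2)
    (hab : 0 ≤ b - a) (h₀ : α₀ ≤ (b - a) / K) (h₁ : (b - a) / K ≤ α₁) :
    ENNReal.ofReal ((K * CR)⁻¹ * (b - a) ^ δ) ≤ μ.map F (Icc a b) := by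
  have hK1 : (1 : ℝ) ≤ K := hK
  have hK0 : (0 : ℝ) < K := zero_lt_one.trans_le hK1
  set r := (b - a) / 2 / K
  have hlen : p + r - (p - r) = (b - a) / K := by ring
  have hsub : Icc (p - r) (p + r) ⊆ F ⁻¹' Icc a b := by
    have := hFl.closedBall_div_subset_preimage (zero_lt_one.trans_le hK).ne' p ((b - a) / 2)
    rwa [hFp, Real.closedBall_eq_Icc, Real.closedBall_eq_Icc,
      show (a + b) / 2 - (b - a) / 2 = a by ring, show (a + b) / 2 + (b - a) / 2 = b by ring] at this
  have hpowers : (K * CR)⁻¹ * (b - a) ^ δ ≤ CR⁻¹ * ((b - a) / K) ^ δ := by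
    have := mul_rpow_le_mul_rpow_of_one_le hK1 (div_nonneg hab hK0.le) hδ
    rw [mul_div_cancel₀ _ hK0.ne'] at this
    calc (K * CR)⁻¹ * (b - a) ^ δ ≤ (K * CR)⁻¹ * (K * ((b - a) / K) ^ δ) := by gcongr
      _ = CR⁻¹ * ((b - a) / K) ^ δ := by field_simp
  calc ENNReal.ofReal ((K * CR)⁻¹ * (b - a) ^ δ)
      ≤ ENNReal.ofReal (CR⁻¹ * (p + r - (p - r)) ^ δ) := by
        rw [hlen]; exact ENNReal.ofReal_le_ofReal hpowers
    _ ≤ μ (Icc (p - r) (p + r)) :=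
        hμ _ _ (hlen ▸ h₀) (hlen ▸ h₁) (by convert hp using 1; ring)
    _ ≤ μ (F ⁻¹' Icc a b) := measure_mono hsub
    _ = μ.map F (Icc a b) := (hF.map_apply μ _).symm

end PushforwardBounds

theorem IsDeltaRegular.image {X : Set ℝ} {δ CR α₀ α₁ : ℝ} {F : ℝ → ℝ} {K : ℝ≥0}
    (hK : 1 ≤ K) (hFl : LipschitzWith K F) (hFa : AntilipschitzWith K F)
    (hδ : δ ≤ 1) (hCR : 0 ≤ CR) (hα₀ : 0 ≤ α₀) (h : IsDeltaRegular X δ CR α₀ α₁) :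
    IsDeltaRegular (F '' X) δ (K * CR) (K * α₀) ((K : ℝ)⁻¹ * α₁) := by
  obtain ⟨μ, hμX, hμup, hμlow⟩ := h
  have hF : MeasurableEmbedding F := hFl.continuous.measurableEmbedding hFa.injective
  have hK1 : (1 : ℝ) ≤ K := hK
  have hK0 : (0 : ℝ) < K := zero_lt_one.trans_le hK1
  refine ⟨μ.map F, ?_, fun a b h₀ h₁ => ?_, fun a b h₀ h₁ ⟨p, hp, hFp⟩ => ?_⟩
  · rw [hF.map_apply, preimage_compl, hFa.injective.preimage_image, hμX]
  all_goals
    have hab : 0 ≤ b - a := le_trans (by positivity) h₀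
    have hα₀K : α₀ ≤ K * α₀ := le_mul_of_one_le_left hα₀ hK1
    have hbaK : b - a ≤ K * (b - a) := le_mul_of_one_le_left hab hK1
    have hK₁ : K * (b - a) ≤ α₁ := by
      simpa [← mul_assoc, hK0.ne'] using mul_le_mul_of_nonneg_left h₁ hK0.le
  · exact map_Icc_le_of_antilipschitzWith hF hFa hK hδ hCR hμup hab (by linarith) hK₁
  · refine le_map_Icc_of_lipschitzWith hF hFl hK hδ hCR hμlow hp hFp hab ?_ ?_
    · rw [le_div_iff₀ hK0]; linarith
    · have hα₁ : α₁ ≤ α₁ * K := le_mul_of_one_le_right (hab.trans (hbaK.trans hK₁)) hK1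
      rw [div_le_iff₀ hK0]; linarith

theorem stmt_3_general (F : ℝ → ℝ) (CF : ℝ) (hCF : 1 ≤ CF)
    (hF : ContDiff ℝ 1 F)
    (hder : ∀ x : ℝ, CF⁻¹ ≤ |deriv F x| ∧ |deriv F x| ≤ CF)
    (X : Set ℝ) (δ CR α₀ α₁ : ℝ)
    (hδ1 : δ ≤ 1) (hCR : 1 ≤ CR) (hα0 : 0 ≤ α₀)
    (h : IsDeltaRegular X δ CR α₀ α₁) :
    IsDeltaRegular (F '' X) δ (CF * CR) (CF * α₀) (CF⁻¹ * α₁) := by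
  lift CF to ℝ≥0 using by linarith
  have hCF' : 1 ≤ CF := by exact_mod_cast hCF
  have hdiff : Differentiable ℝ F := hF.differentiable one_ne_zero
  have hFl : LipschitzWith CF F :=
    lipschitzWith_of_nnnorm_deriv_le hdiff fun x => (hder x).2
  have hFa : AntilipschitzWith CF F := by
    simpa using antilipschitzWith_of_le_nnnorm_deriv (inv_pos.2 (zero_lt_one.trans_le hCF')) hdiff
      fun x => by rw [← NNReal.coe_le_coe, NNReal.coe_inv, coe_nnnorm]; exact (hder x).1
  exact h.image hCF' hFl hFa hδ1 (by linarith) hα0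

theorem stmt_3 (F : ℝ → ℝ) (CF : ℝ) (hCF : 1 ≤ CF)
    (hF : ContDiff ℝ 1 F) (hbij : Function.Bijective F)
    (hder : ∀ x : ℝ, CF⁻¹ ≤ |deriv F x| ∧ |deriv F x| ≤ CF)
    (X : Set ℝ) (δ CR α₀ α₁ : ℝ)
    (hδ0 : 0 ≤ δ) (hδ1 : δ ≤ 1) (hCR : 1 ≤ CR) (hα0 : 0 ≤ α₀) (hα : CF ^ 2 * α₀ ≤ α₁)
    (h : IsDeltaRegular X δ CR α₀ α₁) :
    IsDeltaRegular (F '' X) δ (CF * CR) (CF * α₀) (CF⁻¹ * α₁) :=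
  stmt_3_general F CF hCF hF hder X δ CR α₀ α₁ hδ1 hCR hα0 h
end

section
/- Let X be δ-regular with constant C_R on scales α₀ to α₁. Fix nested intervals J ⊆ J' with the same center, J ≠ J', and |J'| − |J| ≥ α₀. Assume X ∩ J is nonempty and X ∩ J' ⊆ J. Then X ∩ J is δ-regular with constant C_R on scales α₀ to min(α₁, |J'| − |J|). -/
open MeasureTheory Set

theorem stmt_4 (X : Set ℝ) (δ CR α₀ α₁ : ℝ)
    (hδ0 : 0 ≤ δ) (hδ1 : δ ≤ 1) (hCR : 1 ≤ CR) (hα0 : 0 ≤ α₀) (hα : α₀ ≤ α₁)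
    (h : IsDeltaRegular X δ CR α₀ α₁)
    (c s s' : ℝ) (hs : 0 ≤ s) (hss' : s < s') (hgap : α₀ ≤ 2 * (s' - s))
    (hne : (X ∩ Set.Icc (c - s) (c + s)).Nonempty)
    (hsub : X ∩ Set.Icc (c - s') (c + s') ⊆ Set.Icc (c - s) (c + s)) :
    IsDeltaRegular (X ∩ Set.Icc (c - s) (c + s)) δ CR α₀ (min α₁ (2 * (s' - s))) := by
  obtain ⟨μ, h0, hub, hlb⟩ := h
  refine ⟨μ.restrict (Set.Icc (c - s') (c + s')), ?_, ?_, ?_⟩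
  · rw [Measure.restrict_apply' measurableSet_Icc]
    refine measure_mono_null (fun x hx => ?_) h0
    obtain ⟨hx1, hx2⟩ := hx
    intro hxX
    exact hx1 ⟨hxX, hsub ⟨hxX, hx2⟩⟩
  · intro a b h1 h2
    rw [Measure.restrict_apply' measurableSet_Icc]
    exact le_trans (measure_mono (Set.inter_subset_left)) (hub a b h1 (h2.trans (min_le_left _ _)))
  · intro a b h1 h2 hm
    rw [Measure.restrict_apply' measurableSet_Icc]
    have hmJ : (a + b) / 2 ∈ Set.Icc (c - s) (c + s) := hm.2
    obtain ⟨hmJ1, hmJ2⟩ := hmJ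
    have h2' : b - a ≤ 2 * (s' - s) := h2.trans (min_le_right _ _)
    have hsubJ' : Set.Icc a b ⊆ Set.Icc (c - s') (c + s') := by
      intro x hx
      obtain ⟨hx1, hx2⟩ := hx
      constructor <;> linarith
    rw [Set.inter_eq_self_of_subset_left hsubJ']
    exact hlb a b h1 (h2.trans (min_le_left _ _)) hm.1
end

section
/- (Missing subinterval property) Let X be δ-regular with constant C_R on scales α₀ to α₁, where 0 ≤ δ < 1. Fix an integer L ≥ (3C_R)^{2/(1−δ)}. Let I be an interval with α₀ ≤ |I|/L < |I| ≤ α₁ and let I₁, …, I_L be the partition of I into L consecutive intervals of size |I|/L. Then there exists ℓ ∈ {1, …, L} with X ∩ I_ℓ = ∅. -/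
open MeasureTheory Set

/-- Missing subinterval property. -/
theorem stmt_5 (X : Set ℝ) (δ CR α₀ α₁ : ℝ)
    (hδ0 : 0 ≤ δ) (hδ1 : δ < 1) (hCR : 1 ≤ CR) (hα0 : 0 ≤ α₀) (hα : α₀ ≤ α₁)
    (h : IsDeltaRegular X δ CR α₀ α₁)
    (L : ℕ) (hL : (3 * CR) ^ (2 / (1 - δ)) ≤ (L : ℝ))
    (a b : ℝ) (h1 : α₀ ≤ (b - a) / L) (h2 : (b - a) / L < b - a) (h3 : b - a ≤ α₁) :
    ∃ ℓ : ℕ, ℓ < L ∧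
      X ∩ Set.Icc (a + ℓ * ((b - a) / L)) (a + (ℓ + 1) * ((b - a) / L)) = ∅ := by
  obtain ⟨μ, hμX, hup, hlow⟩ := h
  by_contra hcon
  push_neg at hcon
  set s : ℝ := (b - a) / L with hs
  have hCR0 : (0 : ℝ) < CR := lt_of_lt_of_le one_pos hCR
  have h1δ : (0 : ℝ) < 1 - δ := by linarith
  have hLpos : (0 : ℝ) < L :=
    lt_of_lt_of_le (Real.rpow_pos_of_pos (by linarith) _) hL
  have hL1 : 1 ≤ L := Nat.cast_pos.mp hLpos
  have hL1r : (1 : ℝ) ≤ L := by exact_mod_cast hL1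
  have hba : 0 < b - a := by
    by_contra hba'
    push_neg at hba'
    have h2' : b - a < (b - a) * L := (div_lt_iff₀ hLpos).mp h2
    nlinarith [mul_nonpos_of_nonpos_of_nonneg hba' (le_of_lt hLpos)]
  have hspos : 0 < s := div_pos hba hLpos
  have hLs : (L : ℝ) * s = b - a := by
    rw [hs]; field_simp
  -- key numeric inequality
  have key : (3 * CR) ^ (2 : ℝ) ≤ (L : ℝ) ^ (1 - δ) := by
    calc (3 * CR) ^ (2 : ℝ) = ((3 * CR) ^ (2 / (1 - δ))) ^ (1 - δ) := by
          rw [← Real.rpow_mul (by linarith), div_mul_cancel₀]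
          exact ne_of_gt h1δ
      _ ≤ (L : ℝ) ^ (1 - δ) :=
          Real.rpow_le_rpow (Real.rpow_nonneg (by linarith) _) hL (le_of_lt h1δ)
  have hLδpos : (0 : ℝ) < (L : ℝ) ^ δ := Real.rpow_pos_of_pos hLpos δ
  have hkey : 9 * CR ^ 2 * (L : ℝ) ^ δ ≤ L := by
    have h9 : 9 * CR ^ 2 ≤ (L : ℝ) ^ (1 - δ) := by
      have h2' : (3 * CR) ^ (2 : ℝ) = 9 * CR ^ 2 := by
        rw [show (2 : ℝ) = ((2 : ℕ) : ℝ) by norm_num, Real.rpow_natCast]; ring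
      have := key
      rw [h2'] at this
      exact this
    calc 9 * CR ^ 2 * (L : ℝ) ^ δ ≤ (L : ℝ) ^ (1 - δ) * (L : ℝ) ^ δ :=
          mul_le_mul_of_nonneg_right h9 (le_of_lt hLδpos)
      _ = (L : ℝ) ^ ((1 - δ) + δ) := (Real.rpow_add hLpos _ _).symm
      _ = L := by norm_num
  have hLδ1 : (1 : ℝ) ≤ (L : ℝ) ^ δ := by
    calc (1 : ℝ) = (1 : ℝ) ^ δ := (Real.one_rpow δ).symm
      _ ≤ (L : ℝ) ^ δ := Real.rpow_le_rpow zero_le_one hL1r hδ0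
  have hL9 : (9 : ℝ) ≤ L := by nlinarith
  -- choose points
  have hx : ∀ ℓ : ℕ, ℓ < L → ∃ y, y ∈ X ∧ a + ℓ * s ≤ y ∧ y ≤ a + (ℓ + 1) * s := by
    intro ℓ hℓ
    obtain ⟨y, hy⟩ := hcon ℓ hℓ
    exact ⟨y, hy.1, hy.2.1, hy.2.2⟩
  choose! x hxX hxl hxr using hx
  set N : ℕ := (L - 1) / 3 with hN
  have hidx : ∀ j, j < N → 3 * j + 1 < L := by omega
  have hn2 : L ≤ 3 * N + 3 := by omega
  have hn2r : (L : ℝ) ≤ 3 * N + 3 := by exact_mod_cast hn2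
  set K : ℕ → Set ℝ := fun j => Set.Icc (x (3 * j + 1) - s / 2) (x (3 * j + 1) + s / 2)
    with hK
  have hxlo : ∀ j, j < N → a + (3 * (j : ℝ) + 1) * s ≤ x (3 * j + 1) := by
    intro j hj
    have := hxl (3 * j + 1) (hidx j hj)
    push_cast at this
    linarith
  have hxhi : ∀ j, j < N → x (3 * j + 1) ≤ a + (3 * (j : ℝ) + 2) * s := by
    intro j hj
    have := hxr (3 * j + 1) (hidx j hj)
    push_cast at this
    linarith
  -- lower measure bound per interval
  have hμK : ∀ j, j < N → ENNReal.ofReal (CR⁻¹ * s ^ δ) ≤ μ (K j) := by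
    intro j hj
    have hdiff : (x (3 * j + 1) + s / 2) - (x (3 * j + 1) - s / 2) = s := by ring
    have hmid : ((x (3 * j + 1) - s / 2) + (x (3 * j + 1) + s / 2)) / 2 = x (3 * j + 1) := by
      ring
    have := hlow (x (3 * j + 1) - s / 2) (x (3 * j + 1) + s / 2)
      (by rw [hdiff]; exact h1) (by rw [hdiff]; linarith)
      (by rw [hmid]; exact hxX _ (hidx j hj))
    rw [hdiff] at this
    exact this
  -- pairwise disjoint
  have hclaim : ∀ i j, i < N → j < N → i < j → Disjoint (K i) (K j) := by
    intro i j hi hj hij'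
    have hcast : (i : ℝ) + 1 ≤ (j : ℝ) := by exact_mod_cast Nat.succ_le_of_lt hij'
    rw [Set.disjoint_left]
    intro y hyi hyj
    have hi2 := hxhi i hi
    have hj1 := hxlo j hj
    have hyi2 : y ≤ x (3 * i + 1) + s / 2 := hyi.2
    have hyj1 : x (3 * j + 1) - s / 2 ≤ y := hyj.1
    nlinarith [mul_le_mul_of_nonneg_right hcast (le_of_lt hspos)]
  have hdisj : (↑(Finset.range N) : Set ℕ).PairwiseDisjoint K := by
    intro i hi j hj hij
    simp only [Finset.coe_range, Set.mem_Iio] at hi hj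
    rcases lt_or_gt_of_ne hij with hlt | hgt
    · exact hclaim i j hi hj hlt
    · exact (hclaim j i hj hi hgt).symm
  -- union contained in [a,b]
  have hsub : (⋃ j ∈ Finset.range N, K j) ⊆ Set.Icc a b := by
    intro y hy
    simp only [Set.mem_iUnion, Finset.mem_range] at hy
    obtain ⟨j, hj, hyK⟩ := hy
    have hj1 := hxlo j hj
    have hj2 := hxhi j hj
    have hjn : (3 : ℝ) * j + 3 ≤ L := by
      have : 3 * j + 3 ≤ L := by omega
      exact_mod_cast this
    have hjnn : (0 : ℝ) ≤ (j : ℝ) := Nat.cast_nonneg j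
    constructor
    · linarith [hyK.1, hj1, mul_nonneg hjnn hspos.le, hspos]
    · linarith [hyK.2, hj2, mul_le_mul_of_nonneg_right hjn (le_of_lt hspos), hLs, hspos]
  -- measure chain
  have hmeas : ∀ j ∈ Finset.range N, MeasurableSet (K j) := fun j _ => measurableSet_Icc
  have hα0ba : α₀ ≤ b - a := le_trans h1 (le_of_lt h2)
  have hupper := hup a b hα0ba h3
  have hsum : (N : ENNReal) * ENNReal.ofReal (CR⁻¹ * s ^ δ) ≤ μ (Set.Icc a b) := by
    calc (N : ENNReal) * ENNReal.ofReal (CR⁻¹ * s ^ δ)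
        = ∑ j ∈ Finset.range N, ENNReal.ofReal (CR⁻¹ * s ^ δ) := by
          rw [Finset.sum_const, Finset.card_range, nsmul_eq_mul]
      _ ≤ ∑ j ∈ Finset.range N, μ (K j) :=
          Finset.sum_le_sum fun j hj => hμK j (Finset.mem_range.mp hj)
      _ = μ (⋃ j ∈ Finset.range N, K j) := (measure_biUnion_finset hdisj hmeas).symm
      _ ≤ μ (Set.Icc a b) := measure_mono hsub
  have hsδ : (0 : ℝ) < s ^ δ := Real.rpow_pos_of_pos hspos δ
  have hmain : (N : ℝ) * (CR⁻¹ * s ^ δ) ≤ CR * (b - a) ^ δ := by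
    have h' : ENNReal.ofReal ((N : ℝ) * (CR⁻¹ * s ^ δ)) ≤ ENNReal.ofReal (CR * (b - a) ^ δ) := by
      rw [ENNReal.ofReal_mul (by positivity), ENNReal.ofReal_natCast]
      exact le_trans hsum hupper
    exact (ENNReal.ofReal_le_ofReal_iff (by positivity)).mp h'
  have hbaδ : (b - a) ^ δ = (L : ℝ) ^ δ * s ^ δ := by
    rw [← hLs, Real.mul_rpow (le_of_lt hLpos) (le_of_lt hspos)]
  rw [hbaδ] at hmain
  -- N ≤ CR^2 * L^δ
  have hA : (N : ℝ) ≤ CR ^ 2 * (L : ℝ) ^ δ := by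
    have h'' : (N : ℝ) * CR⁻¹ ≤ CR * (L : ℝ) ^ δ := by
      have hm2 : ((N : ℝ) * CR⁻¹) * s ^ δ ≤ (CR * (L : ℝ) ^ δ) * s ^ δ := by
        linarith [hmain]
      exact le_of_mul_le_mul_right hm2 hsδ
    calc (N : ℝ) = ((N : ℝ) * CR⁻¹) * CR := by field_simp
      _ ≤ (CR * (L : ℝ) ^ δ) * CR := mul_le_mul_of_nonneg_right h'' (le_of_lt hCR0)
      _ = CR ^ 2 * (L : ℝ) ^ δ := by ring
  linarith [hkey, hA, hn2r, hL9]
end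

section
/- (Splitting into smaller regular sets) Let X be δ-regular with constant C_R on scales α₀ to α₁, with 0 ≤ δ < 1, and assume (4C_R)^{2/(1−δ)} α₀ ≤ ρ ≤ α₁. Then there exists a collection 𝒥 of pairwise disjoint intervals such that X = ⊔_{J ∈ 𝒥} (X ∩ J), every J ∈ 𝒥 satisfies (4C_R)^{−2/(1−δ)} ρ ≤ |J| ≤ ρ, and each nonempty X ∩ J is δ-regular with constant (4C_R)^{2/(1−δ)} C_R on scales α₀ to ρ. -/
/-!
Cut the line into cells of length `ℓ = ρ / K`, `K = (4 C_R)^{2/(1-δ)}`. Among any `⌊K⌋`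
consecutive cells one misses `X`: otherwise the intervals of length `ℓ` centred at points of `X`
in every other cell are disjoint, and the lower bound gives them total mass about
`(K/2) C_R⁻¹ ℓ^δ`, more than the upper bound `C_R (Kℓ)^δ` allows for the whole window. Hence
the maximal runs of cells meeting `X` have length between `ℓ` and `ρ` and are flanked by
`X`-free cells. Restricted to such a run `J`, the measure keeps its upper bound, and an interval
of length at most `ℓ` centred at a point of `X ∩ J` has all of its mass inside `J`; comparing
scales `ℓ` and `ρ = Kℓ` costs the factor `K` in the lower bound. For `ρ = 0` the points of `X`
themselves form the partition.
-/

open MeasureTheory Set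

theorem rpow_le_mul_min_rpow {s m K δ : ℝ} (hs : 0 ≤ s) (hm : 0 ≤ m) (hK : 1 ≤ K)
    (hsK : s ≤ K * m) (hδ0 : 0 ≤ δ) (hδ1 : δ ≤ 1) : s ^ δ ≤ K * min s m ^ δ := by
  rcases le_total s m with h | h
  · rw [min_eq_left h]
    exact le_mul_of_one_le_left (by positivity) hK
  · rw [min_eq_right h]
    calc s ^ δ ≤ (K * m) ^ δ := Real.rpow_le_rpow hs hsK hδ0
      _ = K ^ δ * m ^ δ := Real.mul_rpow (by linarith) hm
      _ ≤ K * m ^ δ := by gcongr; exact Real.rpow_le_self_of_one_le hK hδ1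

theorem IsDeltaRegular.inter_Icc {X : Set ℝ} {δ CR α₀ α₁ : ℝ} (h : IsDeltaRegular X δ CR α₀ α₁)
    (hδ0 : 0 ≤ δ) (hδ1 : δ ≤ 1) (hCR : 0 < CR) (hα₀ : 0 ≤ α₀) {ℓ K ρ u v : ℝ} (hℓ : α₀ ≤ ℓ)
    (hK : 1 ≤ K) (hρℓ : ρ ≤ K * ℓ) (hρα₁ : ρ ≤ α₁)
    (hu : Disjoint X (Ico (u - ℓ) u)) (hv : Disjoint X (Ico v (v + ℓ))) :
    IsDeltaRegular (X ∩ Icc u v) δ (K * CR) α₀ ρ := by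
  obtain ⟨μ, hXc, hub, hlb⟩ := h
  refine ⟨μ.restrict (Icc u v), ?_, fun a b hab hba => ?_, fun a b hab hba hx => ?_⟩
  · rw [Measure.restrict_apply' measurableSet_Icc]
    exact measure_mono_null (fun y hy hyX => hy.1 ⟨hyX, hy.2⟩) hXc
  · have : 0 ≤ (b - a) ^ δ := Real.rpow_nonneg (hα₀.trans hab) δ
    calc μ.restrict (Icc u v) (Icc a b) ≤ μ (Icc a b) := Measure.restrict_apply_le _ _
      _ ≤ ENNReal.ofReal (CR * (b - a) ^ δ) := hub a b hab (hba.trans hρα₁)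
      _ ≤ ENNReal.ofReal (K * CR * (b - a) ^ δ) := by
        gcongr
        exact le_mul_of_one_le_left hCR.le hK
  · set x := (a + b) / 2 with hx_def
    set m := min (b - a) ℓ
    have hm : α₀ ≤ m := le_min hab hℓ
    have hxJ : x ∈ Icc u v := hx.2
    have hsub : Icc (x - m / 2) (x + m / 2) ∩ X ⊆ Icc a b ∩ Icc u v := by
      rintro y ⟨⟨hy₁, hy₂⟩, hyX⟩
      have : m ≤ b - a := min_le_left _ _
      have : m ≤ ℓ := min_le_right _ _
      refine ⟨⟨by linarith, by linarith⟩, ⟨?_, ?_⟩⟩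
      · by_contra! hyu
        exact hu.notMem_of_mem_left hyX ⟨by linarith [hxJ.1], hyu⟩
      · by_contra! hvy
        exact hv.notMem_of_mem_left hyX ⟨hvy.le, by linarith [hxJ.2]⟩
    have hmass : ENNReal.ofReal (CR⁻¹ * m ^ δ) ≤ μ (Icc (x - m / 2) (x + m / 2)) := by
      have hlen : x + m / 2 - (x - m / 2) = m := by ring
      have := hlb (x - m / 2) (x + m / 2) (by linarith) (by linarith [min_le_left (b - a) ℓ])
        (by convert hx.1 using 1; ring)
      rwa [hlen] at this
    have hpow : (b - a) ^ δ ≤ K * m ^ δ :=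
      rpow_le_mul_min_rpow (hα₀.trans hab) (hα₀.trans hℓ) hK (hba.trans hρℓ) hδ0 hδ1
    calc ENNReal.ofReal ((K * CR)⁻¹ * (b - a) ^ δ)
        ≤ ENNReal.ofReal (CR⁻¹ * m ^ δ) := by
          refine ENNReal.ofReal_le_ofReal ?_
          calc (K * CR)⁻¹ * (b - a) ^ δ ≤ (K * CR)⁻¹ * (K * m ^ δ) := by gcongr
            _ = CR⁻¹ * m ^ δ := by field_simp
      _ ≤ μ (Icc (x - m / 2) (x + m / 2)) := hmass
      _ = μ (Icc (x - m / 2) (x + m / 2) ∩ X) := (measure_inter_conull hXc).symm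
      _ ≤ μ (Icc a b ∩ Icc u v) := measure_mono hsub
      _ = μ.restrict (Icc u v) (Icc a b) := (Measure.restrict_apply' measurableSet_Icc).symm

theorem disjoint_Icc_of_lt_abs_sub {x y ℓ : ℝ} (h : ℓ < |x - y|) :
    Disjoint (Icc (x - ℓ / 2) (x + ℓ / 2)) (Icc (y - ℓ / 2) (y + ℓ / 2)) := by
  rw [Set.disjoint_left]
  rintro z ⟨hz₁, hz₂⟩ ⟨hz₃, hz₄⟩
  rcases lt_abs.mp h with h | h <;> linarith

theorem IsDeltaRegular.card_le_of_pairwise_lt_abs_sub {X : Set ℝ} {δ CR α₀ α₁ ℓ a b : ℝ}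
    (h : IsDeltaRegular X δ CR α₀ α₁) (hCR : 0 < CR) (hℓ : 0 < ℓ) (hℓ₀ : α₀ ≤ ℓ)
    (hℓ₁ : ℓ ≤ α₁) (hab : ℓ ≤ b - a) (hba : b - a ≤ α₁) {ι : Type*} (s : Finset ι)
    (x : ι → ℝ) (hxX : ∀ i ∈ s, x i ∈ X) (hxab : ∀ i ∈ s, a + ℓ / 2 ≤ x i ∧ x i + ℓ / 2 ≤ b)
    (hsep : (s : Set ι).Pairwise fun i j => ℓ < |x i - x j|) :
    (s.card : ℝ) ≤ CR ^ 2 * ((b - a) / ℓ) ^ δ := by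
  obtain ⟨μ, -, hub, hlb⟩ := h
  have hmass : ENNReal.ofReal (s.card * (CR⁻¹ * ℓ ^ δ)) ≤ ENNReal.ofReal (CR * (b - a) ^ δ) :=
    calc ENNReal.ofReal (s.card * (CR⁻¹ * ℓ ^ δ))
        = ∑ i ∈ s, ENNReal.ofReal (CR⁻¹ * ℓ ^ δ) := by
          rw [ENNReal.ofReal_mul (Nat.cast_nonneg _), ENNReal.ofReal_natCast, Finset.sum_const,
            nsmul_eq_mul]
      _ ≤ ∑ i ∈ s, μ (Icc (x i - ℓ / 2) (x i + ℓ / 2)) := by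
          refine Finset.sum_le_sum fun i hi => ?_
          have hlen : x i + ℓ / 2 - (x i - ℓ / 2) = ℓ := by ring
          have := hlb (x i - ℓ / 2) (x i + ℓ / 2) (by linarith) (by linarith)
            (by convert hxX i hi using 1; ring)
          rwa [hlen] at this
      _ = μ (⋃ i ∈ s, Icc (x i - ℓ / 2) (x i + ℓ / 2)) :=
          (measure_biUnion_finset (hsep.mono' fun i j => disjoint_Icc_of_lt_abs_sub (x := x i)
            (y := x j)) fun _ _ => measurableSet_Icc).symm
      _ ≤ μ (Icc a b) := measure_mono <| iUnion₂_subset fun i hi =>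
          Icc_subset_Icc (by linarith [hxab i hi]) (by linarith [hxab i hi])
      _ ≤ ENNReal.ofReal (CR * (b - a) ^ δ) := hub a b (hℓ₀.trans hab) hba
  have hpos : 0 < ℓ ^ δ := by positivity
  have : 0 ≤ (b - a) ^ δ := Real.rpow_nonneg (by linarith) δ
  rw [ENNReal.ofReal_le_ofReal_iff (by positivity)] at hmass
  calc (s.card : ℝ) = s.card * (CR⁻¹ * ℓ ^ δ) * CR / ℓ ^ δ := by field_simp
    _ ≤ CR * (b - a) ^ δ * CR / ℓ ^ δ := by gcongr
    _ = CR ^ 2 * ((b - a) / ℓ) ^ δ := by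
        rw [Real.div_rpow (by linarith) hℓ.le]
        ring

theorem IsDeltaRegular.exists_disjoint_Ico {X : Set ℝ} {δ CR α₀ α₁ ℓ : ℝ}
    (h : IsDeltaRegular X δ CR α₀ α₁) (hCR : 0 < CR) (hℓ : 0 < ℓ) (hα₀ : α₀ ≤ ℓ) {L : ℕ}
    (hLα₁ : L * ℓ ≤ α₁) (hL : 2 * (CR ^ 2 * (L : ℝ) ^ δ) + 2 < L) (m : ℤ) :
    ∃ k : ℤ, m ≤ k ∧ k < m + L ∧ Disjoint X (Ico (k * ℓ) ((k + 1) * ℓ)) := by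
  by_contra! hcon
  have hL2 : (2 : ℝ) < L := by nlinarith [Real.rpow_nonneg (Nat.cast_nonneg L) δ]
  set N := (L - 1) / 2
  have hNL : (L : ℝ) ≤ 2 * N + 2 := by
    have : L ≤ 2 * N + 2 := by omega
    exact_mod_cast this
  -- points of `X` in every other cell, skipping the end cells, so that the intervals of length
  -- `ℓ` centred at them are disjoint and stay in the window
  have hcell (i : Fin N) :
      (X ∩ Ico (((m + 1 + 2 * i : ℤ) : ℝ) * ℓ) ((((m + 1 + 2 * i : ℤ) : ℝ) + 1) * ℓ)).Nonempty := by
    have := i.2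
    exact not_disjoint_iff_nonempty_inter.mp (hcon _ (by omega) (by omega))
  choose x hxX hx using hcell
  have hsep {i j : Fin N} (hij : i < j) : x i + ℓ < x j := by
    obtain ⟨-, hi⟩ := hx i
    obtain ⟨hj, -⟩ := hx j
    have : (i : ℝ) + 1 ≤ j := by exact_mod_cast hij
    push_cast at hi hj
    nlinarith
  have hLℓ : (m + L) * ℓ - m * ℓ = L * ℓ := by ring
  have hcard := h.card_le_of_pairwise_lt_abs_sub (a := m * ℓ) (b := (m + L) * ℓ) hCR hℓ hα₀
    (by nlinarith) (by rw [hLℓ]; nlinarith) (by rwa [hLℓ]) Finset.univ x (fun i _ => hxX i)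
    (fun i _ => ?_) (fun i _ j _ hij => ?_)
  · rw [Finset.card_univ, Fintype.card_fin, hLℓ, mul_div_cancel_right₀ _ hℓ.ne'] at hcard
    linarith
  · obtain ⟨hi₁, hi₂⟩ := hx i
    have : 2 * (i : ℝ) + 3 ≤ L := by
      have := i.2
      have : 2 * (i : ℕ) + 3 ≤ L := by omega
      exact_mod_cast this
    push_cast at hi₁ hi₂
    constructor <;> nlinarith
  · refine lt_abs.mpr ?_
    rcases hij.lt_or_gt with hij | hij
    · exact Or.inr (by linarith [hsep hij])
    · exact Or.inl (by linarith [hsep hij])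

def IsMaximalRun (E : ℤ → Prop) (s e : ℤ) : Prop :=
  s ≤ e ∧ E (s - 1) ∧ E (e + 1) ∧ ∀ k, s ≤ k → k ≤ e → ¬ E k

namespace IsMaximalRun

variable {E : ℤ → Prop} {s e s' e' : ℤ}

theorem exists_mem {m : ℤ} (hm : ¬ E m) (hbelow : ∃ k < m, E k) (habove : ∃ k > m, E k) :
    ∃ s e, IsMaximalRun E s e ∧ s ≤ m ∧ m ≤ e := by
  obtain ⟨g, ⟨hgm, hg⟩, hgmax⟩ := Int.exists_greatest_of_bdd (P := fun k => k < m ∧ E k)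
    ⟨m, fun k hk => hk.1.le⟩ (by simpa using hbelow)
  obtain ⟨w, ⟨hmw, hw⟩, hwmin⟩ := Int.exists_least_of_bdd (P := fun k => m < k ∧ E k)
    ⟨m, fun k hk => hk.1.le⟩ (by simpa using habove)
  refine ⟨g + 1, w - 1, ⟨by omega, by simpa using hg, by simpa using hw, fun k hk₁ hk₂ hk => ?_⟩,
    by omega, by omega⟩
  rcases lt_trichotomy k m with hkm | rfl | hmk
  · exact absurd (hgmax k ⟨hkm, hk⟩) (by omega)
  · exact hm hk
  · exact absurd (hwmin k ⟨hmk, hk⟩) (by omega)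

theorem sub_lt {L : ℤ} (hE : ∀ m, ∃ k, m ≤ k ∧ k < m + L ∧ E k) (h : IsMaximalRun E s e) :
    e + 1 - s < L := by
  obtain ⟨k, hsk, hkL, hk⟩ := hE s
  have : e < k := lt_of_not_ge fun hke => h.2.2.2 k hsk hke hk
  omega

theorem eq_or_separated (h : IsMaximalRun E s e) (h' : IsMaximalRun E s' e') :
    (s = s' ∧ e = e') ∨ e + 1 < s' ∨ e' + 1 < s := by
  obtain ⟨hse, hs, he, hrun⟩ := h
  obtain ⟨hse', hs', he', hrun'⟩ := h'
  by_cases hes' : e < s'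
  · exact Or.inr (Or.inl (lt_of_le_of_ne hes' fun h => hrun' _ le_rfl hse' (h ▸ he)))
  by_cases hes : e' < s
  · exact Or.inr (Or.inr (lt_of_le_of_ne hes fun h => hrun _ le_rfl hse (h ▸ he')))
  refine Or.inl ⟨?_, ?_⟩
  · rcases lt_trichotomy s s' with hlt | heq | hlt
    · exact absurd hs' (hrun _ (by omega) (by omega))
    · exact heq
    · exact absurd hs (hrun' _ (by omega) (by omega))
  · rcases lt_trichotomy e e' with hlt | heq | hlt
    · exact absurd he (hrun' _ (by omega) (by omega))
    · exact heq
    · exact absurd he' (hrun _ (by omega) (by omega))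

end IsMaximalRun

def IsGappedPartition (X : Set ℝ) (𝒥 : Set (Set ℝ)) (ℓ ρ : ℝ) : Prop :=
  (∀ J ∈ 𝒥, ∃ a b, J = Icc a b ∧ ℓ ≤ b - a ∧ b - a ≤ ρ ∧
      Disjoint X (Ico (a - ℓ) a) ∧ Disjoint X (Ico b (b + ℓ))) ∧
    𝒥.PairwiseDisjoint id ∧ X = ⋃ J ∈ 𝒥, X ∩ J

theorem isGappedPartition_Icc_self (X : Set ℝ) :
    IsGappedPartition X ((fun x => Icc x x) '' X) 0 0 := by
  refine ⟨?_, ?_, ?_⟩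
  · rintro _ ⟨x, -, rfl⟩
    exact ⟨x, x, rfl, by simp, by simp, by simp, by simp⟩
  · rintro _ ⟨x, -, rfl⟩ _ ⟨y, -, rfl⟩ hxy
    simp only [Icc_self, Function.onFun, id, disjoint_singleton]
    exact fun h => hxy (h ▸ rfl)
  · refine Subset.antisymm (fun x hx => ?_) (iUnion₂_subset fun _ _ => inter_subset_left)
    exact mem_biUnion (mem_image_of_mem _ hx) ⟨hx, left_mem_Icc.mpr le_rfl⟩

theorem exists_isGappedPartition_of_forall_exists_disjoint {X : Set ℝ} {ℓ : ℝ} (hℓ : 0 < ℓ)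
    {L : ℕ} (hgap : ∀ m : ℤ, ∃ k, m ≤ k ∧ k < m + L ∧ Disjoint X (Ico (k * ℓ) ((k + 1) * ℓ))) :
    ∃ 𝒥, IsGappedPartition X 𝒥 ℓ (L * ℓ) := by
  set E : ℤ → Prop := fun k => Disjoint X (Ico (k * ℓ) ((k + 1) * ℓ))
  refine ⟨{J | ∃ s e, IsMaximalRun E s e ∧ J = Icc (s * ℓ) ((e + 1) * ℓ)}, ?_, ?_, ?_⟩
  · rintro _ ⟨s, e, hR, rfl⟩
    have hlen : ((e : ℝ) + 1) * ℓ - s * ℓ = ((e + 1 - s : ℤ) : ℝ) * ℓ := by push_cast; ring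
    have h₁ : (1 : ℝ) ≤ ((e + 1 - s : ℤ) : ℝ) := by
      have := hR.1
      exact_mod_cast (by omega : 1 ≤ e + 1 - s)
    have h₂ : ((e + 1 - s : ℤ) : ℝ) ≤ L := by exact_mod_cast (hR.sub_lt hgap).le
    refine ⟨_, _, rfl, by rw [hlen]; nlinarith, by rw [hlen]; nlinarith, ?_, ?_⟩
    · convert hR.2.1 using 3 <;> push_cast <;> ring
    · convert hR.2.2.1 using 3 <;> push_cast <;> ring
  · rintro _ ⟨s, e, hR, rfl⟩ _ ⟨s', e', hR', rfl⟩ hne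
    have hsep {u v u' v' : ℤ} (h : v + 1 < u') :
        Disjoint (Icc ((u : ℝ) * ℓ) ((v + 1) * ℓ)) (Icc ((u' : ℝ) * ℓ) ((v' + 1) * ℓ)) := by
      have : (v : ℝ) + 1 < u' := by exact_mod_cast h
      exact disjoint_left.mpr fun y hy hy' => by nlinarith [hy.2, hy'.1]
    rcases hR.eq_or_separated hR' with ⟨rfl, rfl⟩ | h | h
    · exact absurd rfl hne
    · exact hsep h
    · exact (hsep h).symm
  · refine Subset.antisymm (fun y hy => ?_) (iUnion₂_subset fun _ _ => inter_subset_left)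
    set m := ⌊y / ℓ⌋
    have hm : ¬ E m := by
      refine not_disjoint_iff.mpr ⟨y, hy, ?_, ?_⟩
      · exact (le_div_iff₀ hℓ).mp (Int.floor_le _)
      · exact (div_lt_iff₀ hℓ).mp (Int.lt_floor_add_one _)
    obtain ⟨s, e, hR, hsm, hme⟩ := IsMaximalRun.exists_mem hm
      (by obtain ⟨k, hk₁, hk₂, hk⟩ := hgap (m - L); exact ⟨k, by omega, hk⟩)
      (by obtain ⟨k, hk₁, hk₂, hk⟩ := hgap (m + 1); exact ⟨k, by omega, hk⟩)
    refine mem_biUnion ⟨s, e, hR, rfl⟩ ⟨hy, ?_, ?_⟩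
    · have : (s : ℝ) ≤ m := by exact_mod_cast hsm
      nlinarith [(le_div_iff₀ hℓ).mp (Int.floor_le (y / ℓ))]
    · have : (m : ℝ) ≤ e := by exact_mod_cast hme
      nlinarith [(div_lt_iff₀ hℓ).mp (Int.lt_floor_add_one (y / ℓ))]

theorem IsDeltaRegular.exists_isGappedPartition {X : Set ℝ} {δ CR α₀ α₁ : ℝ}
    (h : IsDeltaRegular X δ CR α₀ α₁) (hδ : 0 ≤ δ) (hCR : 0 < CR) (hα₀ : 0 ≤ α₀) {K ρ : ℝ}
    (hK : 4 ≤ K) (hKδ : CR ^ 2 * K ^ δ ≤ K / 16) (hρ₀ : K * α₀ ≤ ρ) (hρ₁ : ρ ≤ α₁) :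
    ∃ 𝒥, IsGappedPartition X 𝒥 (ρ / K) ρ := by
  rcases ((mul_nonneg (by linarith) hα₀).trans hρ₀).eq_or_lt with rfl | hρ
  · exact ⟨_, by simpa using isGappedPartition_Icc_self X⟩
  set L := ⌊K⌋₊
  have hLK : (L : ℝ) ≤ K := Nat.floor_le (by linarith)
  have hℓ : 0 < ρ / K := by positivity
  have hLℓ : L * (ρ / K) ≤ ρ := by
    calc L * (ρ / K) ≤ K * (ρ / K) := by gcongr
      _ = ρ := mul_div_cancel₀ _ (by linarith)
  have hL : 2 * (CR ^ 2 * (L : ℝ) ^ δ) + 2 < L := by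
    have : (L : ℝ) ^ δ ≤ K ^ δ := Real.rpow_le_rpow (Nat.cast_nonneg L) hLK hδ
    nlinarith [Nat.lt_floor_add_one K]
  have hgap := h.exists_disjoint_Ico hCR hℓ ((le_div_iff₀ (by linarith)).mpr (by linarith))
    (hLℓ.trans hρ₁) hL
  obtain ⟨𝒥, h𝒥, hdisj, hcover⟩ := exists_isGappedPartition_of_forall_exists_disjoint hℓ hgap
  refine ⟨𝒥, fun J hJ => ?_, hdisj, hcover⟩
  obtain ⟨a, b, hJ, h₁, h₂, hgaps⟩ := h𝒥 J hJ
  exact ⟨a, b, hJ, h₁, h₂.trans hLℓ, hgaps⟩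

/-- Splitting into smaller regular sets. -/
theorem stmt_8 (X : Set ℝ) (δ CR α₀ α₁ ρ : ℝ)
    (hδ0 : 0 ≤ δ) (hδ1 : δ < 1) (hCR : 1 ≤ CR) (hα0 : 0 ≤ α₀)
    (hρ1 : (4 * CR) ^ (2 / (1 - δ)) * α₀ ≤ ρ) (hρ2 : ρ ≤ α₁)
    (h : IsDeltaRegular X δ CR α₀ α₁) :
    ∃ 𝒥 : Set (Set ℝ),
      (∀ J ∈ 𝒥, ∃ a b : ℝ,
          J = Set.Icc a b ∧ (4 * CR) ^ (-(2 / (1 - δ))) * ρ ≤ b - a ∧ b - a ≤ ρ) ∧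
      𝒥.PairwiseDisjoint id ∧
      (X = ⋃ J ∈ 𝒥, X ∩ J) ∧
      (∀ J ∈ 𝒥, (X ∩ J).Nonempty →
        IsDeltaRegular (X ∩ J) δ ((4 * CR) ^ (2 / (1 - δ)) * CR) α₀ ρ) := by
  set K := (4 * CR) ^ (2 / (1 - δ))
  have hK1δ : K ^ (1 - δ) = 16 * CR ^ 2 := by
    rw [← Real.rpow_mul (by linarith), div_mul_cancel₀ _ (by linarith)]
    norm_num [mul_pow]
  have hK1 : 1 ≤ K := Real.one_le_rpow (by linarith) (div_nonneg zero_le_two (by linarith))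
  have hK16 : 16 ≤ K := by
    nlinarith [Real.rpow_le_self_of_one_le hK1 (by linarith : 1 - δ ≤ 1)]
  have hKδ : CR ^ 2 * K ^ δ = K / 16 := by
    have := Real.rpow_add (by linarith : 0 < K) (1 - δ) δ
    rw [sub_add_cancel, Real.rpow_one, hK1δ] at this
    linarith
  obtain ⟨𝒥, h𝒥, hdisj, hcover⟩ :=
    h.exists_isGappedPartition hδ0 (by linarith) hα0 (by linarith) hKδ.le hρ1 hρ2
  refine ⟨𝒥, fun J hJ => ?_, hdisj, hcover, fun J hJ _ => ?_⟩
  · obtain ⟨a, b, rfl, hab, hba, -⟩ := h𝒥 J hJ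
    refine ⟨a, b, rfl, ?_, hba⟩
    rwa [Real.rpow_neg (by linarith), inv_mul_eq_div]
  · obtain ⟨a, b, rfl, -, -, hu, hv⟩ := h𝒥 J hJ
    have hρ : ρ ≤ K * (ρ / K) := (mul_div_cancel₀ _ (by linarith)).ge
    exact h.inter_Icc hδ0 hδ1.le (by linarith) hα0 ((le_div_iff₀ (by linarith)).mpr
      (by linarith)) hK1 hρ hρ2 hu hv
end

section
/- (Missing child in the covering tree) Let X be δ-regular with constant C_R on scales α₀ to α₁, 0 ≤ δ < 1. Let L ≥ (3C_R)^{2/(1−δ)} be an integer, L ≥ 2, and let n ∈ ℤ satisfy α₀ ≤ L^{−n−1} ≤ L^{−n} ≤ α₁. Define V_m(X) = {[j/L^m, (j+1)/L^m] : j ∈ ℤ, [j/L^m, (j+1)/L^m] ∩ X ≠ ∅}. Then every interval I ∈ V_n(X) contains at most L − 1 intervals of V_{n+1}(X). -/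
/-!
If all `L` children of a parent interval met `X`, every third child would carry an interval of
length `ℓ = L^(-n-1)` centred at a point of `X`; these are pairwise disjoint, each has mass at
least `C_R⁻¹ ℓ^δ`, and together they lie in two intervals of length `Lℓ`, of total mass at most
`2 C_R (Lℓ)^δ`. This gives `L^(1-δ) ≤ 6 C_R²`, against `L^(1-δ) ≥ 9 C_R²`.
-/

open MeasureTheory Set Classical

lemma IsDeltaRegular.exists_measure {X : Set ℝ} {δ CR α₀ α₁ : ℝ}
    (h : IsDeltaRegular X δ CR α₀ α₁) :
    ∃ μ : Measure ℝ,
      (∀ s ∈ Icc α₀ α₁, ∀ t, μ (Icc t (t + s)) ≤ ENNReal.ofReal (CR * s ^ δ)) ∧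
      (∀ s ∈ Icc α₀ α₁, ∀ x ∈ X,
        ENNReal.ofReal (CR⁻¹ * s ^ δ) ≤ μ (Icc (x - s / 2) (x + s / 2))) := by
  obtain ⟨μ, -, hup, hlow⟩ := h
  refine ⟨μ, fun s hs t => ?_, fun s hs x hx => ?_⟩
  · simpa using hup t (t + s) (by simpa using hs.1) (by simpa using hs.2)
  · have hlen : x + s / 2 - (x - s / 2) = s := by ring
    have hmid : (x - s / 2 + (x + s / 2)) / 2 = x := by ring
    have := hlow (x - s / 2) (x + s / 2) (by rw [hlen]; exact hs.1) (by rw [hlen]; exact hs.2)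
      (by rw [hmid]; exact hx)
    rwa [hlen] at this

lemma measure_Icc_le_two_mul {μ : Measure ℝ} {s : ℝ} {b : ENNReal}
    (hb : ∀ t, μ (Icc t (t + s)) ≤ b) {c d : ℝ} (hcd : d - c ≤ 2 * s) :
    μ (Icc c d) ≤ 2 * b :=
  calc μ (Icc c d) ≤ μ (Icc c (c + s) ∪ Icc (d - s) (d - s + s)) :=
        measure_mono fun t ht => by
          by_cases h : t ≤ c + s
          · exact Or.inl ⟨ht.1, h⟩
          · exact Or.inr ⟨by linarith, by linarith [ht.2]⟩
    _ ≤ b + b := (measure_union_le _ _).trans (add_le_add (hb c) (hb (d - s)))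
    _ = 2 * b := (two_mul b).symm

lemma card_mul_le_measure_Icc_of_separated {μ : Measure ℝ} {X : Set ℝ} {ℓ : ℝ}
    {a : ENNReal} (hlow : ∀ x ∈ X, a ≤ μ (Icc (x - ℓ / 2) (x + ℓ / 2)))
    {M : ℕ} {x : ℕ → ℝ} {c d : ℝ} (hxX : ∀ m < M, x m ∈ X)
    (hsep : ∀ m m', m < m' → m' < M → x m + ℓ < x m')
    (hc : ∀ m < M, c ≤ x m - ℓ / 2) (hd : ∀ m < M, x m + ℓ / 2 ≤ d) :
    M * a ≤ μ (Icc c d) := by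
  have hdisj : (Finset.range M : Set ℕ).PairwiseDisjoint
      fun m => Icc (x m - ℓ / 2) (x m + ℓ / 2) := by
    intro m hm m' hm' hne
    simp only [Finset.coe_range, Set.mem_Iio] at hm hm'
    refine Set.disjoint_left.2 fun t ht ht' => ?_
    rcases hne.lt_or_gt with h | h
    · linarith [hsep m m' h hm', ht.2, ht'.1]
    · linarith [hsep m' m h hm, ht.1, ht'.2]
  calc (M : ENNReal) * a = ∑ _m ∈ Finset.range M, a := by simp
    _ ≤ ∑ m ∈ Finset.range M, μ (Icc (x m - ℓ / 2) (x m + ℓ / 2)) :=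
        Finset.sum_le_sum fun m hm => hlow _ (hxX m (Finset.mem_range.1 hm))
    _ = μ (⋃ m ∈ Finset.range M, Icc (x m - ℓ / 2) (x m + ℓ / 2)) :=
        (measure_biUnion_finset hdisj fun _ _ => measurableSet_Icc).symm
    _ ≤ μ (Icc c d) := measure_mono <| Set.iUnion₂_subset fun m hm =>
        Set.Icc_subset_Icc (hc m (Finset.mem_range.1 hm)) (hd m (Finset.mem_range.1 hm))

lemma card_children_div_three_mul_le {μ : Measure ℝ} {X : Set ℝ} {ℓ : ℝ} (hℓ : 0 < ℓ)
    {a b : ENNReal} (hlow : ∀ x ∈ X, a ≤ μ (Icc (x - ℓ / 2) (x + ℓ / 2)))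
    {L : ℕ} (hL : 1 ≤ L) (hup : ∀ t, μ (Icc t (t + L * ℓ)) ≤ b) {N : ℤ}
    (hX : ∀ k ∈ Finset.Icc N (N + L - 1), (Icc (k * ℓ) ((k + 1) * ℓ) ∩ X).Nonempty) :
    (((L + 2) / 3 : ℕ) : ENNReal) * a ≤ 2 * b := by
  have hpt : ∀ m < (L + 2) / 3, ∃ y ∈ X,
      ((N + 3 * m : ℤ) : ℝ) * ℓ ≤ y ∧ y ≤ ((N + 3 * m : ℤ) + 1 : ℝ) * ℓ := by
    intro m hm
    obtain ⟨y, hy, hyX⟩ := hX (N + 3 * m) (Finset.mem_Icc.2 ⟨by omega, by omega⟩)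
    exact ⟨y, hyX, hy⟩
  choose! x hxX hx using hpt
  have hL' : (1 : ℝ) ≤ L := by exact_mod_cast hL
  refine (card_mul_le_measure_Icc_of_separated hlow (c := N * ℓ - ℓ / 2)
    (d := (N + L) * ℓ + ℓ / 2) hxX (fun m m' h hm' => ?_) (fun m hm => ?_)
    (fun m hm => ?_)).trans (measure_Icc_le_two_mul hup (by nlinarith))
  · have h3 : ((N + 3 * m : ℤ) : ℝ) + 3 ≤ ((N + 3 * m' : ℤ) : ℝ) := by
      exact_mod_cast (by omega : N + 3 * (m : ℤ) + 3 ≤ N + 3 * m')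
    nlinarith [(hx m (h.trans hm')).2, (hx m' hm').1]
  · have h3 : (N : ℝ) ≤ ((N + 3 * m : ℤ) : ℝ) := by
      exact_mod_cast (by omega : N ≤ N + 3 * (m : ℤ))
    nlinarith [(hx m hm).1]
  · have h3 : ((N + 3 * m : ℤ) : ℝ) + 1 ≤ N + L := by
      exact_mod_cast (by omega : N + 3 * (m : ℤ) + 1 ≤ N + L)
    nlinarith [(hx m hm).2]

lemma nine_mul_sq_mul_rpow_le {δ C L : ℝ} (hδ1 : δ < 1) (hC : 0 ≤ C) (hL0 : 0 < L)
    (hL : (3 * C) ^ (2 / (1 - δ)) ≤ L) : 9 * C ^ 2 * L ^ δ ≤ L := by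
  have h1δ : 0 < 1 - δ := by linarith
  have hpow : ((3 * C) ^ (2 / (1 - δ))) ^ (1 - δ) = 9 * C ^ 2 := by
    rw [← Real.rpow_mul (by positivity), div_mul_cancel₀ _ h1δ.ne', Real.rpow_two]
    ring
  calc 9 * C ^ 2 * L ^ δ ≤ L ^ (1 - δ) * L ^ δ := by
        rw [← hpow]
        gcongr
    _ = L := by rw [← Real.rpow_add hL0, sub_add_cancel, Real.rpow_one]

lemma two_mul_rpow_lt_of_le_three_mul {δ C ℓ : ℝ} {L M : ℕ} (hδ1 : δ < 1) (hC : 0 < C)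
    (hℓ : 0 < ℓ) (hL : (3 * C) ^ (2 / (1 - δ)) ≤ L) (hLM : L ≤ 3 * M) :
    2 * (C * (L * ℓ) ^ δ) < M * (C⁻¹ * ℓ ^ δ) := by
  have hL0 : (0 : ℝ) < L := (Real.rpow_pos_of_pos (by positivity) _).trans_le hL
  have h9 := nine_mul_sq_mul_rpow_le hδ1 hC.le hL0 hL
  have hLM' : (L : ℝ) ≤ 3 * M := by exact_mod_cast hLM
  have hLδ : 0 < (L : ℝ) ^ δ := Real.rpow_pos_of_pos hL0 δ
  have hℓδ : 0 < ℓ ^ δ := Real.rpow_pos_of_pos hℓ δ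
  have hM : 2 * C ^ 2 * L ^ δ < M := by nlinarith [mul_pos (pow_pos hC 2) hLδ]
  calc 2 * (C * (L * ℓ) ^ δ) = 2 * C ^ 2 * L ^ δ * (C⁻¹ * ℓ ^ δ) := by
        rw [Real.mul_rpow hL0.le hℓ.le]
        field_simp
    _ < M * (C⁻¹ * ℓ ^ δ) := by gcongr

theorem stmt_16_general (X : Set ℝ) (δ CR α₀ α₁ : ℝ)
    (hδ1 : δ < 1) (hCR : 1 ≤ CR)
    (h : IsDeltaRegular X δ CR α₀ α₁)
    (L : ℕ) (hL : (3 * CR) ^ (2 / (1 - δ)) ≤ (L : ℝ))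
    (n : ℤ) (hs1 : α₀ ≤ (L : ℝ) ^ (-(n + 1))) (hs2 : (L : ℝ) ^ (-n) ≤ α₁)
    (j : ℤ) :
    ((Finset.Icc (L * j) (L * j + L - 1)).filter (fun k : ℤ =>
        (Set.Icc ((k : ℝ) / (L : ℝ) ^ (n + 1)) (((k : ℝ) + 1) / (L : ℝ) ^ (n + 1)) ∩
          X).Nonempty)).card ≤ L - 1 := by
  obtain ⟨μ, hup, hlow⟩ := h.exists_measure
  have hCR0 : 0 < CR := one_pos.trans_le hCR
  have hL0 : (0 : ℝ) < L := (Real.rpow_pos_of_pos (by positivity) _).trans_le hL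
  set ℓ : ℝ := (L : ℝ) ^ (-(n + 1)) with hℓ_def
  have hL1 : 1 ≤ L := by exact_mod_cast hL0
  have hℓ : 0 < ℓ := zpow_pos hL0 _
  have hℓLℓ : ℓ ≤ L * ℓ := le_mul_of_one_le_left hℓ.le (by exact_mod_cast hL1)
  have hLℓ : (L : ℝ) ^ (-n) = L * ℓ := by
    rw [hℓ_def, ← zpow_one_add₀ hL0.ne']
    congr 1
    ring
  have hchild (r : ℝ) : r / (L : ℝ) ^ (n + 1) = r * ℓ := by
    rw [div_eq_mul_inv, ← zpow_neg]
  suffices hmiss : ∃ k ∈ Finset.Icc (L * j) (L * j + L - 1),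
      ¬ (Set.Icc ((k : ℝ) / (L : ℝ) ^ (n + 1)) (((k : ℝ) + 1) / (L : ℝ) ^ (n + 1)) ∩
          X).Nonempty by
    have := Finset.card_lt_card (Finset.filter_ssubset.2 hmiss)
    rw [Int.card_Icc] at this
    omega
  by_contra! hall
  have hcount := card_children_div_three_mul_le hℓ (hlow ℓ ⟨hs1, hℓLℓ.trans (hLℓ ▸ hs2)⟩)
    hL1 (hup (L * ℓ) ⟨hs1.trans hℓLℓ, hLℓ ▸ hs2⟩)
    (by simpa only [hchild] using hall)
  rw [← ENNReal.ofReal_natCast, ← ENNReal.ofReal_mul (by positivity), ← ENNReal.ofReal_ofNat 2,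
    ← ENNReal.ofReal_mul zero_le_two, ENNReal.ofReal_le_ofReal_iff (by positivity)] at hcount
  exact (two_mul_rpow_lt_of_le_three_mul hδ1 hCR0 hℓ hL (by omega)).not_ge hcount

/-- Each parent in the covering tree of a δ-regular set (δ < 1) is missing a child:
an interval `[j/Lⁿ, (j+1)/Lⁿ]` meeting `X` contains at most `L - 1` subintervals
`[k/Lⁿ⁺¹, (k+1)/Lⁿ⁺¹]` meeting `X`. -/
theorem stmt_16 (X : Set ℝ) (δ CR α₀ α₁ : ℝ)
    (hδ0 : 0 ≤ δ) (hδ1 : δ < 1) (hCR : 1 ≤ CR) (hα0 : 0 ≤ α₀)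
    (h : IsDeltaRegular X δ CR α₀ α₁)
    (L : ℕ) (hL2 : 2 ≤ L) (hL : (3 * CR) ^ (2 / (1 - δ)) ≤ (L : ℝ))
    (n : ℤ) (hs1 : α₀ ≤ (L : ℝ) ^ (-(n + 1))) (hs2 : (L : ℝ) ^ (-n) ≤ α₁)
    (j : ℤ)
    (hj : (Set.Icc ((j : ℝ) / (L : ℝ) ^ n) (((j : ℝ) + 1) / (L : ℝ) ^ n) ∩ X).Nonempty) :
    ((Finset.Icc (L * j) (L * j + L - 1)).filter (fun k : ℤ =>
        (Set.Icc ((k : ℝ) / (L : ℝ) ^ (n + 1)) (((k : ℝ) + 1) / (L : ℝ) ^ (n + 1)) ∩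
          X).Nonempty)).card ≤ L - 1 :=
  stmt_16_general X δ CR α₀ α₁ hδ1 hCR h L hL n hs1 hs2 j
end
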